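/- (Stability condition, skewness-threshold form) Let ω̄ > 0, δ̄ > 0 and 0 < c < 1, and let P(λ) = λ⁴ + 2λ²(ω̄² - 1) + (ω̄² + 1)² - δ̄² over ℂ. Then every root λ ∈ ℂ of P satisfies Re(λ) < c if and only if δ̄ > 2√(1 - c²) and √( √(δ̄² + 4c²) - 1 - c² ) < ω̄ < √( δ̄²/(4(1 - c²)) - c² ). -/

import Mathlib

/-!
`P(λ) = (λ² - s₊)(λ² - s₋)` with `s± = 1 - ω̄² ± √(δ̄² - 4ω̄²)`, so everything reduces to the square
roots `±μ` of a single `s`: both have real part `< c` iff `|Re μ| < c`, i.e. iff `s` lies inside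
the parabola `y² = 4c²(c² - x)`. For a nonnegative discriminant `δ̄² - 4ω̄²` this says `s₊ < c²`;
for a negative one `s±` are conjugate and it says `4ω̄² - δ̄² < 4c²(c² - 1 + ω̄²)`. In the variables
`u = ω̄²`, `k = c²`, `d = δ̄²` both are equivalent to `1 < u + k`, `d + 4k < (u + 1 + k)²` and
`4(u + k)(1 - k) < d`, and under `0 < k < 1` the stated bounds are just these inequalities with
square roots taken (the first, `4(1 - k) < d`, together with the second forces `1 < u + k`).
-/

open Complex

/-- The interior of the parabola traced by `μ ^ 2` as `μ` runs along the line `Re μ = c`. -/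
def InsideParabola (c : ℝ) (s : ℂ) : Prop :=
  s.im ^ 2 < 4 * c ^ 2 * (c ^ 2 - s.re)

lemma insideParabola_sq_iff {c : ℝ} (hc : 0 < c) (μ : ℂ) :
    InsideParabola c (μ ^ 2) ↔ |μ.re| < c := by
  have key : (μ ^ 2).im ^ 2 - 4 * c ^ 2 * (c ^ 2 - (μ ^ 2).re) =
      4 * (μ.re ^ 2 - c ^ 2) * (μ.im ^ 2 + c ^ 2) := by
    simp only [sq, mul_re, mul_im]; ring
  have hpos : 0 < μ.im ^ 2 + c ^ 2 := by positivity
  rw [InsideParabola, ← sub_neg, key, ← sq_lt_sq₀ (abs_nonneg _) hc.le, sq_abs]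
  constructor <;> intro h <;> nlinarith

lemma forall_sq_eq_re_lt_iff {c : ℝ} (hc : 0 < c) (s : ℂ) :
    (∀ μ : ℂ, μ ^ 2 = s → μ.re < c) ↔ InsideParabola c s := by
  obtain ⟨μ, rfl⟩ := IsAlgClosed.exists_pow_nat_eq s two_pos
  simp only [insideParabola_sq_iff hc, abs_lt, sq_eq_sq_iff_eq_or_eq_neg]
  constructor
  · intro h
    exact ⟨by linarith [neg_re μ ▸ h (-μ) (Or.inr rfl)], h μ (Or.inl rfl)⟩
  · rintro ⟨h_neg, h_pos⟩ ν (rfl | rfl)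
    exacts [h_pos, by simp only [neg_re]; linarith]

lemma forall_sq_sub_mul_sq_sub_eq_zero_re_lt_iff {c : ℝ} (hc : 0 < c) (s t : ℂ) :
    (∀ μ : ℂ, (μ ^ 2 - s) * (μ ^ 2 - t) = 0 → μ.re < c) ↔
      InsideParabola c s ∧ InsideParabola c t := by
  simp only [mul_eq_zero, sub_eq_zero, or_imp, forall_and, forall_sq_eq_re_lt_iff hc]

lemma insideParabola_ofReal_iff {c : ℝ} (hc : 0 < c) (x : ℝ) :
    InsideParabola c x ↔ x < c ^ 2 := by
  have : 0 < 4 * c ^ 2 := by positivity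
  simp [InsideParabola, mul_pos_iff_of_pos_left this]

lemma insideParabola_add_mul_I_iff (c x y : ℝ) :
    InsideParabola c (x + y * I) ↔ y ^ 2 < 4 * c ^ 2 * (c ^ 2 - x) := by
  simp [InsideParabola]

def StabilityConditions (u k d : ℝ) : Prop :=
  1 < u + k ∧ d + 4 * k < (u + 1 + k) ^ 2 ∧ 4 * (u + k) * (1 - k) < d

lemma stabilityConditions_iff_of_real_disc {u k d r : ℝ} (hk : 0 < k) (hr : 0 ≤ r)
    (hrd : r ^ 2 = d - 4 * u) :
    (1 - u + r < k ∧ 1 - u - r < k) ↔ StabilityConditions u k d := by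
  constructor
  · rintro ⟨h_add, -⟩
    refine ⟨by linarith, ?_, by nlinarith⟩
    nlinarith [mul_self_lt_mul_self hr (show r < u - 1 + k by linarith)]
  · rintro ⟨h_one, h_bound, -⟩
    have : r < u - 1 + k := by nlinarith
    constructor <;> linarith

lemma stabilityConditions_iff_of_imag_disc {u k d r : ℝ} (hk : 0 < k)
    (hrd : r ^ 2 = 4 * u - d) :
    (r ^ 2 < 4 * k * (k - (1 - u)) ∧ (-r) ^ 2 < 4 * k * (k - (1 - u))) ↔
      StabilityConditions u k d := by
  rw [neg_sq, and_self]
  constructor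
  · intro h
    have h_one : 1 < u + k := by nlinarith
    exact ⟨h_one, by nlinarith, by nlinarith⟩
  · rintro ⟨-, -, h⟩
    nlinarith

lemma stabilityConditions_iff_sqrt_bounds {ω δ c : ℝ} (hω : 0 < ω) (hδ : 0 < δ) (hc0 : 0 < c)
    (hc1 : c < 1) :
    (δ > 2 * √(1 - c ^ 2) ∧ √(√(δ ^ 2 + 4 * c ^ 2) - 1 - c ^ 2) < ω ∧
        ω < √(δ ^ 2 / (4 * (1 - c ^ 2)) - c ^ 2)) ↔
      StabilityConditions (ω ^ 2) (c ^ 2) (δ ^ 2) := by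
  have hk : 0 < 1 - c ^ 2 := by nlinarith
  have h_skew : δ > 2 * √(1 - c ^ 2) ↔ 4 * (1 - c ^ 2) < δ ^ 2 := by
    rw [show 2 * √(1 - c ^ 2) = √(4 * (1 - c ^ 2)) by
      rw [show (4 : ℝ) = 2 ^ 2 by norm_num, Real.sqrt_mul (by positivity), Real.sqrt_sq zero_le_two]]
    exact Real.sqrt_lt' hδ
  have h_lower : √(√(δ ^ 2 + 4 * c ^ 2) - 1 - c ^ 2) < ω ↔
      δ ^ 2 + 4 * c ^ 2 < (ω ^ 2 + 1 + c ^ 2) ^ 2 := by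
    rw [Real.sqrt_lt' hω, sub_sub, sub_lt_iff_lt_add, ← add_assoc, Real.sqrt_lt' (by positivity)]
  have h_upper : ω < √(δ ^ 2 / (4 * (1 - c ^ 2)) - c ^ 2) ↔
      4 * (ω ^ 2 + c ^ 2) * (1 - c ^ 2) < δ ^ 2 := by
    rw [Real.lt_sqrt hω.le, lt_sub_iff_add_lt, lt_div_iff₀ (by positivity)]
    ring_nf
  rw [h_skew, h_lower, h_upper, StabilityConditions]
  constructor
  · rintro ⟨h_skew, h_lower, h_upper⟩
    exact ⟨by nlinarith, h_lower, h_upper⟩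
  · rintro ⟨h_one, h_lower, h_upper⟩
    exact ⟨by nlinarith, h_lower, h_upper⟩

lemma forall_quartic_root_re_lt_iff {ω δ c : ℝ} (hc : 0 < c) {s t : ℂ}
    (hsum : s + t = 2 * (1 - (ω : ℂ) ^ 2)) (hprod : s * t = ((ω : ℂ) ^ 2 + 1) ^ 2 - (δ : ℂ) ^ 2) :
    (∀ μ : ℂ,
        μ ^ 4 + 2 * μ ^ 2 * ((ω : ℂ) ^ 2 - 1) + ((ω : ℂ) ^ 2 + 1) ^ 2 - (δ : ℂ) ^ 2 = 0 →
        μ.re < c) ↔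
      InsideParabola c s ∧ InsideParabola c t := by
  have hfactor : ∀ μ : ℂ,
      μ ^ 4 + 2 * μ ^ 2 * ((ω : ℂ) ^ 2 - 1) + ((ω : ℂ) ^ 2 + 1) ^ 2 - (δ : ℂ) ^ 2 =
        (μ ^ 2 - s) * (μ ^ 2 - t) :=
    fun μ => by linear_combination μ ^ 2 * hsum - hprod
  simp only [hfactor, forall_sq_sub_mul_sq_sub_eq_zero_re_lt_iff hc]

/-- **Stability condition, skewness-threshold form.**  For `ω̄, δ̄ > 0` and `0 < c < 1`,
every complex root of `P(λ) = λ⁴ + 2λ²(ω̄² - 1) + (ω̄² + 1)² - δ̄²` has real part `< c`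
iff `δ̄ > 2√(1 - c²)` and `√(√(δ̄² + 4c²) - 1 - c²) < ω̄ < √(δ̄²/(4(1 - c²)) - c²)`. -/
theorem stmt10 (ωb δb c : ℝ) (hωb : 0 < ωb) (hδb : 0 < δb) (hc0 : 0 < c) (hc1 : c < 1) :
    (∀ μ : ℂ,
        μ ^ 4 + 2 * μ ^ 2 * ((ωb : ℂ) ^ 2 - 1) + ((ωb : ℂ) ^ 2 + 1) ^ 2 - (δb : ℂ) ^ 2 = 0 →
        μ.re < c) ↔
    (δb > 2 * Real.sqrt (1 - c ^ 2) ∧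
      Real.sqrt (Real.sqrt (δb ^ 2 + 4 * c ^ 2) - 1 - c ^ 2) < ωb ∧
      ωb < Real.sqrt (δb ^ 2 / (4 * (1 - c ^ 2)) - c ^ 2)) := by
  have hk : 0 < c ^ 2 := by positivity
  rw [stabilityConditions_iff_sqrt_bounds hωb hδb hc0 hc1]
  rcases le_total (4 * ωb ^ 2) (δb ^ 2) with h_real | h_imag
  · obtain ⟨r, hr0, hr⟩ : ∃ r : ℝ, 0 ≤ r ∧ r ^ 2 = δb ^ 2 - 4 * ωb ^ 2 :=
      ⟨_, Real.sqrt_nonneg _, Real.sq_sqrt (by linarith)⟩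
    have hrC : (r : ℂ) ^ 2 = (δb : ℂ) ^ 2 - 4 * (ωb : ℂ) ^ 2 := by exact_mod_cast hr
    rw [forall_quartic_root_re_lt_iff hc0 (s := ((1 - ωb ^ 2 + r : ℝ) : ℂ))
      (t := ((1 - ωb ^ 2 - r : ℝ) : ℂ)) (by push_cast; ring)
      (by push_cast; linear_combination -hrC),
      insideParabola_ofReal_iff hc0, insideParabola_ofReal_iff hc0]
    exact stabilityConditions_iff_of_real_disc hk hr0 hr
  · obtain ⟨r, hr⟩ : ∃ r : ℝ, r ^ 2 = 4 * ωb ^ 2 - δb ^ 2 :=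
      ⟨_, Real.sq_sqrt (by linarith)⟩
    have hrC : (r : ℂ) ^ 2 = 4 * (ωb : ℂ) ^ 2 - (δb : ℂ) ^ 2 := by exact_mod_cast hr
    rw [forall_quartic_root_re_lt_iff hc0 (s := ((1 - ωb ^ 2 : ℝ) : ℂ) + (r : ℂ) * I)
      (t := ((1 - ωb ^ 2 : ℝ) : ℂ) + ((-r : ℝ) : ℂ) * I) (by push_cast; ring)
      (by push_cast; linear_combination hrC - (r : ℂ) ^ 2 * I_sq),
      insideParabola_add_mul_I_iff, insideParabola_add_mul_I_iff]
    exact stabilityConditions_iff_of_imag_disc hk hr
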